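/- arXiv:2602.01252 — 2 statements merged into one kernel-verified Lean document; each statement's English description precedes it below -/
import Mathlib

section
/- Let b ≥ 2 and k ≥ 1 be integers, and set B = b^k. Let m ≥ 1 with gcd(m, b) = 1 and let r satisfy 0 ≤ r < m. Then for every integer s₀ ≥ 1 there exists a positive integer n with n ≡ r (mod m), s_b(n) = s_B(n) ≥ s₀, s_b(n) dividing n, and s_B(n) dividing n. -/
/-!
Choose `S ≥ s₀` with `S ≡ r [MOD m]` and `S` coprime to `b`, put `B = b ^ k`, `c = φ(S m)`, and
take `n = ∑_{j < S} B ^ (c j)`. In base `B`, and also in base `b` since `B ^ (c j) = b ^ (k c j)`,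
`n` is written with `S` ones separated by zeros, so both digit sums equal `S`. As `B ^ c ≡ 1`
modulo `S m` by Euler's theorem, `n ≡ S [MOD S m]`, which gives both `S ∣ n` and `n ≡ r [MOD m]`.
-/

open Finset

namespace Nat

theorem digits_sum_add_base_pow {b n e : ℕ} (hb : 1 < b) (h : n < b ^ e) :
    (b.digits (n + b ^ e)).sum = (b.digits n).sum + 1 := by
  have hlen : (b.digits n).length ≤ e := (digits_length_le_iff hb n).mpr h
  have happ := digits_append_zeroes_append_digits (k := e - (b.digits n).length) (m := 1) (n := n)
    hb one_pos
  rw [Nat.add_sub_cancel' hlen, mul_one] at happ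
  rw [← happ, digits_of_lt b 1 one_ne_zero hb]
  simp

theorem digits_sum_geom_sum_pow {b c : ℕ} (hb : 1 < b) (hc : c ≠ 0) (S : ℕ) :
    (b.digits (∑ j ∈ range S, (b ^ c) ^ j)).sum = S := by
  induction S with
  | zero => simp
  | succ S ih =>
    have hlt : ∑ j ∈ range S, (b ^ c) ^ j < b ^ (c * S) := by
      rw [pow_mul]
      exact geomSum_lt (Nat.one_lt_pow hc hb) fun j hj ↦ mem_range.mp hj
    rw [sum_range_succ, ← pow_mul, digits_sum_add_base_pow hb hlt, ih]

theorem geom_sum_modEq_of_modEq_one {x N : ℕ} (hx : x ≡ 1 [MOD N]) (S : ℕ) :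
    ∑ j ∈ range S, x ^ j ≡ S [MOD N] := by
  simpa using ModEq.sum fun j (_ : j ∈ range S) ↦ hx.pow j

theorem exists_ge_modEq_modEq_one {m b : ℕ} (hmb : Coprime m b) (hm : m ≠ 0) (hb : b ≠ 0)
    (r s₀ : ℕ) : ∃ S, s₀ ≤ S ∧ S ≡ r [MOD m] ∧ S ≡ 1 [MOD b] := by
  obtain ⟨a, har, ha1⟩ := chineseRemainder hmb r 1
  refine ⟨a + m * b * s₀, ?_, ?_, ?_⟩
  · exact (Nat.le_mul_of_pos_left s₀ (by positivity)).trans (le_add_left _ _)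
  · exact ((modEq_iff_dvd' (le_add_right a _)).mpr ⟨b * s₀, by simp [mul_assoc]⟩).symm.trans har
  · exact ((modEq_iff_dvd' (le_add_right a _)).mpr ⟨m * s₀, by simp; ring⟩).symm.trans ha1

end Nat

theorem stmt_1_general (b k m r : ℕ) (hb : 2 ≤ b) (hk : 1 ≤ k) (hm : 1 ≤ m)
    (hgcd : Nat.gcd m b = 1) (s₀ : ℕ) :
    ∃ n : ℕ, 0 < n ∧ n ≡ r [MOD m] ∧
      (Nat.digits b n).sum = (Nat.digits (b ^ k) n).sum ∧
      s₀ ≤ (Nat.digits b n).sum ∧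
      (Nat.digits b n).sum ∣ n ∧ (Nat.digits (b ^ k) n).sum ∣ n := by
  obtain ⟨S, hS₀, hSr, hS1⟩ :=
    Nat.exists_ge_modEq_modEq_one hgcd (by omega) (by omega) r (s₀ + 1)
  have hSb : Nat.Coprime S b := by simpa [Nat.Coprime] using hS1.gcd_eq
  set c := Nat.totient (S * m)
  have hc : c ≠ 0 := (Nat.totient_pos.mpr (Nat.mul_pos (by omega) (by omega))).ne'
  have hBc : (b ^ k) ^ c ≡ 1 [MOD S * m] :=
    Nat.ModEq.pow_totient ((hSb.symm.mul_right (Nat.coprime_comm.mp hgcd)).pow_left k)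
  set n := ∑ j ∈ range S, ((b ^ k) ^ c) ^ j
  have hsum_b : (Nat.digits b n).sum = S := by
    simpa only [pow_mul] using
      Nat.digits_sum_geom_sum_pow (c := k * c) (by omega) (by positivity) S
  have hsum_B : (Nat.digits (b ^ k) n).sum = S :=
    Nat.digits_sum_geom_sum_pow (Nat.one_lt_pow (by omega) (by omega)) hc S
  have hnS : n ≡ S [MOD S * m] := Nat.geom_sum_modEq_of_modEq_one hBc S
  have hn : 0 < n := Nat.pos_of_ne_zero fun h ↦ by
    simp only [h, Nat.digits_zero, List.sum_nil] at hsum_b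
    omega
  have hdvd : S ∣ n := Nat.modEq_zero_iff_dvd.mp ((hnS.of_mul_right m).trans (Nat.mod_self S))
  exact ⟨n, hn, (hnS.of_mul_left S).trans hSr, hsum_b.trans hsum_B.symm, by omega,
    hsum_b ▸ hdvd, hsum_B ▸ hdvd⟩

/-- For every `s₀ ≥ 1` there is `n` in the progression with
`s_b(n) = s_{b^k}(n) ≥ s₀` and `n` simultaneously `b`- and `b^k`-Niven. -/
theorem stmt_1 (b k m r : ℕ) (hb : 2 ≤ b) (hk : 1 ≤ k) (hm : 1 ≤ m)
    (hgcd : Nat.gcd m b = 1) (hr : r < m) (s₀ : ℕ) (hs₀ : 1 ≤ s₀) :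
    ∃ n : ℕ, 0 < n ∧ n ≡ r [MOD m] ∧
      (Nat.digits b n).sum = (Nat.digits (b ^ k) n).sum ∧
      s₀ ≤ (Nat.digits b n).sum ∧
      (Nat.digits b n).sum ∣ n ∧ (Nat.digits (b ^ k) n).sum ∣ n :=
  stmt_1_general b k m r hb hk hm hgcd s₀
end

section
/- Let b ≥ 2 and k ≥ 1 be integers with B = b^k, let m ≥ 1 with gcd(m, b) = 1, let r satisfy 0 ≤ r < m, and let s ≥ 1 satisfy s ≡ r (mod m) and gcd(s, b) = 1. Set ω = ord_{ms}(B) and n = Σ_{j=0}^{s−1} B^{jω}. Then n ≡ r (mod m), s_b(n) divides n, and s_B(n) divides n; i.e., n lies in the prescribed arithmetic progression and is simultaneously b-Niven and b^k-Niven. -/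
/-!
Since `B ^ ω ≡ 1 (mod m s)`, every summand of `n` is `1` modulo `m s`, so `n ≡ s (mod m s)`:
this puts `n` in the class of `s ≡ r` modulo `m` and makes `s` a divisor of `n`. On the other
hand `n = Σ_{j<s} b^(j k ω)` is a sum of `s` distinct powers of `b` (and of `B`), so both digit
sums equal `s`.
-/

open Finset

namespace Nat

theorem digits_sum_base_pow_mul {b : ℕ} (hb : 1 < b) (k n : ℕ) :
    (digits b (b ^ k * n)).sum = (digits b n).sum := by
  rcases n.eq_zero_or_pos with rfl | hn
  · simp
  · simp [digits_base_pow_mul hb hn]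

theorem digits_sum_sum_range_pow_mul {b e : ℕ} (hb : 1 < b) (he : 0 < e) (t : ℕ) :
    (digits b (∑ j ∈ range t, b ^ (j * e))).sum = t := by
  induction t with
  | zero => simp
  | succ t ih =>
    have hsplit : ∑ j ∈ range (t + 1), b ^ (j * e) =
        1 + b * (b ^ (e - 1) * ∑ j ∈ range t, b ^ (j * e)) := by
      rw [sum_range_succ', mul_sum, mul_sum, add_comm]
      congr 1
      · simp
      · refine sum_congr rfl fun j _ => ?_
        rw [← mul_assoc, ← pow_succ', ← pow_add]
        congr 1
        rw [add_one_mul]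
        omega
    rw [hsplit, digits_add b hb 1 _ hb (Or.inl one_ne_zero), List.sum_cons,
      digits_sum_base_pow_mul hb, ih, add_comm]

end Nat

theorem sum_range_pow_mul_eq_of_pow_eq_one {R : Type*} [CommSemiring R] {x : R} {ω : ℕ}
    (hx : x ^ ω = 1) (s : ℕ) : ∑ j ∈ range s, x ^ (j * ω) = s := by
  simp [mul_comm _ ω, pow_mul, hx]

theorem stmt_8_general (b k m r s : ℕ) (hb : 2 ≤ b) (hk : 1 ≤ k) (hm : 1 ≤ m)
    (hgcd : Nat.gcd m b = 1) (hs : 1 ≤ s) (hsr : s ≡ r [MOD m])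
    (hsb : Nat.gcd s b = 1)
    (ω : ℕ) (hω : ω = orderOf ((b ^ k : ℕ) : ZMod (m * s)))
    (n : ℕ) (hn : n = ∑ j ∈ Finset.range s, (b ^ k) ^ (j * ω)) :
    n ≡ r [MOD m] ∧ (Nat.digits b n).sum ∣ n ∧ (Nat.digits (b ^ k) n).sum ∣ n := by
  have : NeZero (m * s) := ⟨by positivity⟩
  have hunit : IsUnit ((b ^ k : ℕ) : ZMod (m * s)) := (ZMod.isUnit_iff_coprime _ _).mpr <|
    ((Nat.coprime_comm.mp hgcd).mul_right (Nat.coprime_comm.mp hsb)).pow_left k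
  have hω_pos : 0 < ω := hω ▸ (isOfFinOrder_iff_isUnit.mpr hunit).orderOf_pos
  have hn_modEq : n ≡ s [MOD m * s] := by
    rw [← ZMod.natCast_eq_natCast_iff, hn, Nat.cast_sum]
    simp only [Nat.cast_pow]
    exact sum_range_pow_mul_eq_of_pow_eq_one (by rw [← Nat.cast_pow, hω, pow_orderOf_eq_one]) s
  have hs_dvd : s ∣ n := (hn_modEq.dvd_iff (dvd_mul_left s m)).mpr dvd_rfl
  have hsum_b : (Nat.digits b n).sum = s := by
    have hn_base_b : n = ∑ j ∈ range s, b ^ (j * (k * ω)) := by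
      simp only [hn, ← pow_mul, mul_left_comm k]
    exact hn_base_b ▸ Nat.digits_sum_sum_range_pow_mul (by omega) (Nat.mul_pos hk hω_pos) s
  have hsum_B : (Nat.digits (b ^ k) n).sum = s := hn ▸
    Nat.digits_sum_sum_range_pow_mul (Nat.one_lt_pow (by omega) hb) hω_pos s
  exact ⟨(hn_modEq.of_mul_right s).trans hsr, hsum_b ▸ hs_dvd, hsum_B ▸ hs_dvd⟩

/-- With `ω = ord_{ms}(b^k)` and `n = Σ_{j<s} (b^k)^{jω}`, the integer `n` lies in the
progression `r mod m` and is simultaneously `b`-Niven and `b^k`-Niven. -/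
theorem stmt_8 (b k m r s : ℕ) (hb : 2 ≤ b) (hk : 1 ≤ k) (hm : 1 ≤ m)
    (hgcd : Nat.gcd m b = 1) (hr : r < m) (hs : 1 ≤ s) (hsr : s ≡ r [MOD m])
    (hsb : Nat.gcd s b = 1)
    (ω : ℕ) (hω : ω = orderOf ((b ^ k : ℕ) : ZMod (m * s)))
    (n : ℕ) (hn : n = ∑ j ∈ Finset.range s, (b ^ k) ^ (j * ω)) :
    n ≡ r [MOD m] ∧ (Nat.digits b n).sum ∣ n ∧ (Nat.digits (b ^ k) n).sum ∣ n :=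
  stmt_8_general b k m r s hb hk hm hgcd hs hsr hsb ω hω n hn
end
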